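/- arXiv:0910.1412 — 4 statements merged into one kernel-verified Lean document; each statement's English description precedes it below -/
import Mathlib

section
/- Let f be a network, M a symbolic steady state of f, and Z_1,…,Z_m the components of G^θ(M). For each j ∈ {1,…,m} let A_j be an attractor of the asynchronous state transition graph S(f^{Z_j}). Then A := {a ∈ M | π^{Z_j}(a) ∈ A_j for all j ∈ {1,…,m}} is an attractor of S(f). -/
/-! Discrete regulatory networks (Siebert), shared definitions. -/

open Finset

namespace DRN

/-- A (regular) state of a network with `n` components, component `i`
ranging over `{0, …, pᵢ}` (encoded as `Fin (pᵢ + 1)`). -/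
abbrev NState {n : ℕ} (p : Fin n → ℕ) := ∀ i, Fin (p i + 1)

/-- An element of `X^□`: a tuple of finite sets of component values
(intended: discrete intervals), identified with the subset `M₁ × ⋯ × Mₙ` of `X`. -/
abbrev SymState {n : ℕ} (p : Fin n → ℕ) := ∀ i, Finset (Fin (p i + 1))

/-- `x` belongs to the subset of state space represented by `M`. -/
def memBox {n : ℕ} {p : Fin n → ℕ} (x : NState p) (M : SymState p) : Prop :=
  ∀ i, x i ∈ M i

/-- `M ∈ X^□`: every component of `M` is a (nonempty) discrete interval. -/
def IsBox {n : ℕ} {p : Fin n → ℕ} (M : SymState p) : Prop :=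
  ∀ i, ∃ a b : Fin (p i + 1), a ≤ b ∧ M i = Finset.Icc a b

/-- `M` is (identified with) a regular state: all components are singletons. -/
def IsRegular {n : ℕ} {p : Fin n → ℕ} (M : SymState p) : Prop :=
  ∀ i, (M i).card = 1

/-- The function `F : X^□ → X^□`, `F_i(M) = [min_{x∈M} f_i(x), max_{x∈M} f_i(x)]`. -/
noncomputable def Fop {n : ℕ} {p : Fin n → ℕ} (f : NState p → NState p)
    (M : SymState p) : SymState p :=
  fun i => Finset.Icc ((Fintype.piFinset M).inf fun x => f x i)
                      ((Fintype.piFinset M).sup fun x => f x i)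

/-- A symbolic steady state: an element of `X^□ \ X` with `F(M) = M`. -/
def IsSymSteady {n : ℕ} {p : Fin n → ℕ} (f : NState p → NState p)
    (M : SymState p) : Prop :=
  IsBox M ∧ ¬ IsRegular M ∧ Fop f M = M

/-- Edge of the asynchronous state transition graph `S(f)`. -/
def AsyncEdge {n : ℕ} {p : Fin n → ℕ} (f : NState p → NState p)
    (x x' : NState p) : Prop :=
  (x' = x ∧ f x = x) ∨
  ∃ i, f x i ≠ x i ∧ (∀ j, j ≠ i → x' j = x j) ∧
    ((x i < f x i ∧ (x' i : ℕ) = (x i : ℕ) + 1) ∨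
     (f x i < x i ∧ (x' i : ℕ) + 1 = (x i : ℕ)))

/-- A trap set of `S(f)`: a nonempty set that no trajectory ever leaves. -/
def IsTrapSet {n : ℕ} {p : Fin n → ℕ} (f : NState p → NState p)
    (D : Set (NState p)) : Prop :=
  D.Nonempty ∧ ∀ x ∈ D, ∀ x', AsyncEdge f x x' → x' ∈ D

/-- An attractor of `S(f)`: a trap set any two of whose states are joined by a path. -/
def IsAttractor {n : ℕ} {p : Fin n → ℕ} (f : NState p → NState p)
    (A : Set (NState p)) : Prop :=
  IsTrapSet f A ∧ ∀ x ∈ A, ∀ y ∈ A, Relation.ReflTransGen (AsyncEdge f) x y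

/-- The sequence `M̃⁰ = M`, `M̃ᵏ_j = [min(M̃ᵏ⁻¹_j ∪ F_j(M̃ᵏ⁻¹)), max(M̃ᵏ⁻¹_j ∪ F_j(M̃ᵏ⁻¹))]`
whose limit is the extended forward orbit of `M`. -/
noncomputable def efoSeq {n : ℕ} {p : Fin n → ℕ} (f : NState p → NState p)
    (M : SymState p) : ℕ → SymState p
  | 0 => M
  | k + 1 => fun j =>
      Finset.Icc ((efoSeq f M k j ∪ Fop f (efoSeq f M k) j).inf id)
                 ((efoSeq f M k j ∪ Fop f (efoSeq f M k) j).sup id)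

/-- Signed edge `(i, j, ε)` of the global interaction graph `G(f)(Y)`
(for `Y = Set.univ` this is the global interaction graph `G(f)`). -/
def GEdge {n : ℕ} {p : Fin n → ℕ} (f : NState p → NState p) (Y : Set (NState p))
    (i j : Fin n) (ε : ℤ) : Prop :=
  ∃ x ∈ Y, ∃ x' : NState p, ∃ c : ℤ, (c = 1 ∨ c = -1) ∧
    (∀ l, l ≠ i → x' l = x l) ∧ (((x' i : ℕ) : ℤ) = ((x i : ℕ) : ℤ) + c) ∧
    Int.sign (((f x' j : ℕ) : ℤ) - ((f x j : ℕ) : ℤ)) * c = ε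

/-- Signed edge `(i, j, ε)` of `G(f|_M)`: both states involved must lie in `M`. -/
def GEdgeRestr {n : ℕ} {p : Fin n → ℕ} (f : NState p → NState p) (M : SymState p)
    (i j : Fin n) (ε : ℤ) : Prop :=
  ∃ x x' : NState p, memBox x M ∧ memBox x' M ∧ ∃ c : ℤ, (c = 1 ∨ c = -1) ∧
    (∀ l, l ≠ i → x' l = x l) ∧ (((x' i : ℕ) : ℤ) = ((x i : ℕ) : ℤ) + c) ∧
    Int.sign (((f x' j : ℕ) : ℤ) - ((f x j : ℕ) : ℤ)) * c = ε

/-- `J(M)`: the set of symbolic-valued (non-singleton) components of `M`. -/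
def JSet {n : ℕ} {p : Fin n → ℕ} (M : SymState p) : Set (Fin n) :=
  {i | 1 < (M i).card}

/-- Signed edge of `G^θ(M)`: an edge of `G(f|_M)` with both end-vertices in `J(M)`. -/
def ThetaEdge {n : ℕ} {p : Fin n → ℕ} (f : NState p → NState p) (M : SymState p)
    (i j : Fin n) (ε : ℤ) : Prop :=
  i ∈ JSet M ∧ j ∈ JSet M ∧ GEdgeRestr f M i j ε

/-- Adjacency (some signed edge) in `G^θ(M)`. -/
def ThetaAdj {n : ℕ} {p : Fin n → ℕ} (f : NState p → NState p) (M : SymState p)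
    (i j : Fin n) : Prop :=
  ∃ ε : ℤ, (ε = 1 ∨ ε = -1) ∧ ThetaEdge f M i j ε

/-- Weak connectivity in `G^θ(M)`. -/
def ThetaConn {n : ℕ} {p : Fin n → ℕ} (f : NState p → NState p) (M : SymState p) :
    Fin n → Fin n → Prop :=
  Relation.ReflTransGen fun a b => ThetaAdj f M a b ∨ ThetaAdj f M b a

/-- `V` is the vertex set of a component (maximal weakly connected subgraph) of `G^θ(M)`;
since components are induced subgraphs, they are determined by their vertex sets. -/
def IsComponent {n : ℕ} {p : Fin n → ℕ} (f : NState p → NState p) (M : SymState p)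
    (V : Set (Fin n)) : Prop :=
  ∃ i ∈ JSet M, V = {j | j ∈ JSet M ∧ ThetaConn f M i j}

/-- States of a network module with component set `V ⊆ {1,…,n}`
(vertices of `G(g)` renamed via the order-preserving bijection `ι`). -/
abbrev MState {n : ℕ} (p : Fin n → ℕ) (V : Set (Fin n)) := ∀ i : V, Fin (p i.1 + 1)

/-- The projection `π^V` onto the components in `V`. -/
def projV {n : ℕ} {p : Fin n → ℕ} (V : Set (Fin n)) (x : NState p) : MState p V :=
  fun i => x i.1

open Classical in
/-- `ρ^V : X^V → X^□`, filling components outside `V` with `M_i`. -/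
noncomputable def rhoV {n : ℕ} {p : Fin n → ℕ} (M : SymState p) (V : Set (Fin n))
    (z : MState p V) : SymState p :=
  fun i => if h : i ∈ V then {z ⟨i, h⟩} else M i

/-- The network module `f^V = π^V ∘ F ∘ ρ^V` derived from a component with vertex set `V`
(`Finset.inf _ id` extracts the unique element of the singleton `F_i(ρ^V(z))`). -/
noncomputable def modFun {n : ℕ} {p : Fin n → ℕ} (f : NState p → NState p)
    (M : SymState p) (V : Set (Fin n)) (z : MState p V) : MState p V :=
  fun i => (Fop f (rhoV M V z) i.1).inf id

/-- `z` lies in the module state space `X^V = ∏_{i ∈ V} M_i`. -/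
def memBoxV {n : ℕ} {p : Fin n → ℕ} (M : SymState p) (V : Set (Fin n))
    (z : MState p V) : Prop :=
  ∀ i : V, z i ∈ M i.1

/-- Edge of the asynchronous state transition graph `S(g)` of a module `g` with
state space `X^V = ∏_{i ∈ V} M_i`. -/
def ModAsyncEdge {n : ℕ} {p : Fin n → ℕ} (M : SymState p) (V : Set (Fin n))
    (g : MState p V → MState p V) (z z' : MState p V) : Prop :=
  memBoxV M V z ∧ memBoxV M V z' ∧
  ((z' = z ∧ g z = z) ∨
   ∃ i : V, g z i ≠ z i ∧ (∀ l, l ≠ i → z' l = z l) ∧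
     ((z i < g z i ∧ (z' i : ℕ) = (z i : ℕ) + 1) ∨
      (g z i < z i ∧ (z' i : ℕ) + 1 = (z i : ℕ))))

/-- Attractor of the state transition graph of a module with state space `X^V`. -/
def IsModAttractor {n : ℕ} {p : Fin n → ℕ} (M : SymState p) (V : Set (Fin n))
    (g : MState p V → MState p V) (A : Set (MState p V)) : Prop :=
  A.Nonempty ∧ (∀ z ∈ A, memBoxV M V z) ∧
  (∀ z ∈ A, ∀ z', ModAsyncEdge M V g z z' → z' ∈ A) ∧
  ∀ z ∈ A, ∀ z' ∈ A, Relation.ReflTransGen (ModAsyncEdge M V g) z z'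

/-- Edge of the product state transition graph `S^M` (Def. 4.1),
given the components `V 1, …, V m` of `G^θ(M)`. -/
noncomputable def SMEdge {n : ℕ} {p : Fin n → ℕ} (f : NState p → NState p)
    (M : SymState p) {m : ℕ} (V : Fin m → Set (Fin n)) (x1 x2 : NState p) : Prop :=
  memBox x1 M ∧ memBox x2 M ∧
  ((x1 = x2 ∧ ∀ j, ModAsyncEdge M (V j) (modFun f M (V j))
      (projV (V j) x1) (projV (V j) x2)) ∨
   ∃ j, ModAsyncEdge M (V j) (modFun f M (V j)) (projV (V j) x1) (projV (V j) x2) ∧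
     ∀ i, i ∉ V j → x1 i = x2 i)

section Aux

variable {n : ℕ} {p : Fin n → ℕ} {f : NState p → NState p} {M : SymState p}

lemma box_nonempty (hB : IsBox M) (i : Fin n) : (M i).Nonempty := by
  obtain ⟨a, b, hab, h⟩ := hB i
  rw [h]; exact Finset.nonempty_Icc.mpr hab

lemma box_mem_of_between (hB : IsBox M) {i : Fin n} {u v w : Fin (p i + 1)}
    (hu : u ∈ M i) (hv : v ∈ M i) (h1 : u ≤ w) (h2 : w ≤ v) : w ∈ M i := by
  obtain ⟨a, b, hab, h⟩ := hB i
  rw [h] at hu hv ⊢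
  simp only [Finset.mem_Icc] at *
  exact ⟨le_trans hu.1 h1, le_trans h2 hv.2⟩

lemma fx_mem (hM : IsSymSteady f M) {x : NState p} (hx : memBox x M) (i : Fin n) :
    f x i ∈ M i := by
  have hxm : x ∈ Fintype.piFinset M := Fintype.mem_piFinset.mpr hx
  have h : f x i ∈ Fop f M i := by
    simp only [Fop, Finset.mem_Icc]
    exact ⟨Finset.inf_le hxm, Finset.le_sup (f := fun y => f y i) hxm⟩
  rwa [hM.2.2] at h

lemma frozen (hM : IsSymSteady f M) {x : NState p} (hx : memBox x M) {i : Fin n}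
    (hi : i ∉ JSet M) : f x i = x i := by
  have h1 : (M i).card ≤ 1 := not_lt.mp hi
  exact Finset.card_le_one.mp h1 _ (fx_mem hM hx i) _ (hx i)

lemma mem_JSet_of_two {i : Fin n} {u v : Fin (p i + 1)} (hu : u ∈ M i) (hv : v ∈ M i)
    (huv : u ≠ v) : i ∈ JSet M :=
  Finset.one_lt_card.mpr ⟨u, hu, v, hv, huv⟩

lemma conn_symm {a b : Fin n} (h : ThetaConn f M a b) : ThetaConn f M b a :=
  by
    unfold ThetaConn at h ⊢
    induction h with
    | refl => exact Relation.ReflTransGen.refl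
    | tail _ hbc ih => exact Relation.ReflTransGen.head (Or.symm hbc) ih

variable {m : ℕ} {V : Fin m → Set (Fin n)}

lemma comp_sub_JSet (hcomp : ∀ W : Set (Fin n), IsComponent f M W ↔ ∃ j, V j = W)
    (j : Fin m) : V j ⊆ JSet M := by
  obtain ⟨i0, hi0, hV⟩ := (hcomp (V j)).mpr ⟨j, rfl⟩
  rw [hV]; exact fun k hk => hk.1

lemma adj_mem_comp (hcomp : ∀ W : Set (Fin n), IsComponent f M W ↔ ∃ j, V j = W)
    (j : Fin m) {i l : Fin n} (hi : i ∈ V j) (hadj : ThetaAdj f M l i) : l ∈ V j := by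
  obtain ⟨i0, hi0, hV⟩ := (hcomp (V j)).mpr ⟨j, rfl⟩
  obtain ⟨ε, hε, hlJ, hiJ, hedge⟩ := hadj
  rw [hV] at hi ⊢
  exact ⟨hlJ, hi.2.tail (Or.inr ⟨ε, hε, hlJ, hiJ, hedge⟩)⟩

lemma comp_disjoint (hVinj : Function.Injective V)
    (hcomp : ∀ W : Set (Fin n), IsComponent f M W ↔ ∃ j, V j = W)
    {j k : Fin m} {i : Fin n} (hj : i ∈ V j) (hk : i ∈ V k) : j = k := by
  apply hVinj
  obtain ⟨a, ha, hVa⟩ := (hcomp (V j)).mpr ⟨j, rfl⟩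
  obtain ⟨b, hb, hVb⟩ := (hcomp (V k)).mpr ⟨k, rfl⟩
  rw [hVa] at hj; rw [hVb] at hk
  have hab : ThetaConn f M a b := hj.2.trans (conn_symm hk.2)
  rw [hVa, hVb]
  ext c
  exact ⟨fun hc => ⟨hc.1, (conn_symm hab).trans hc.2⟩,
         fun hc => ⟨hc.1, hab.trans hc.2⟩⟩

lemma comp_cover (hcomp : ∀ W : Set (Fin n), IsComponent f M W ↔ ∃ j, V j = W)
    {i : Fin n} (hi : i ∈ JSet M) : ∃ j, i ∈ V j := by
  obtain ⟨j, hj⟩ := (hcomp _).mp ⟨i, hi, rfl⟩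
  exact ⟨j, by rw [hj]; exact ⟨hi, Relation.ReflTransGen.refl⟩⟩

lemma step_const (hcomp : ∀ W : Set (Fin n), IsComponent f M W ↔ ∃ j, V j = W)
    {j : Fin m} {i l : Fin n} (hi : i ∈ V j) (hl : l ∉ V j)
    {x x' : NState p} (hx : memBox x M) (hx' : memBox x' M)
    (hagree : ∀ k, k ≠ l → x' k = x k) {c : ℤ} (hc : c = 1 ∨ c = -1)
    (hstep : ((x' l : ℕ) : ℤ) = ((x l : ℕ) : ℤ) + c) : f x' i = f x i := by
  by_contra hne
  have hvne : ((f x' i : ℕ) : ℤ) - ((f x i : ℕ) : ℤ) ≠ 0 := by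
    intro h
    exact hne (Fin.ext (by omega))
  set s : ℤ := Int.sign (((f x' i : ℕ) : ℤ) - ((f x i : ℕ) : ℤ)) with hs
  have hsval : s = 1 ∨ s = -1 := by
    rcases lt_trichotomy (((f x' i : ℕ) : ℤ) - ((f x i : ℕ) : ℤ)) 0 with h|h|h
    · right; rw [hs]; exact Int.sign_eq_neg_one_of_neg h
    · exact absurd h hvne
    · left; rw [hs]; exact Int.sign_eq_one_of_pos h
  have hε : s * c = 1 ∨ s * c = -1 := by
    rcases hsval with h|h <;> rcases hc with h'|h' <;> rw [h, h'] <;> norm_num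
  have hlJ : l ∈ JSet M := by
    refine mem_JSet_of_two (hx' l) (hx l) ?_
    intro h
    have h2 : ((x' l : ℕ) : ℤ) = ((x l : ℕ) : ℤ) := by rw [h]
    rcases hc with h'|h' <;> omega
  have hiJ : i ∈ JSet M := comp_sub_JSet hcomp j hi
  have hadj : ThetaAdj f M l i :=
    ⟨s * c, hε, hlJ, hiJ, x, x', hx, hx', c, hc, hagree, hstep, rfl⟩
  exact hl (adj_mem_comp hcomp j hi hadj)

lemma coord_const (hB : IsBox M)
    (hcomp : ∀ W : Set (Fin n), IsComponent f M W ↔ ∃ j, V j = W)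
    {j : Fin m} {i l : Fin n} (hi : i ∈ V j) (hl : l ∉ V j)
    {x : NState p} (hx : memBox x M) :
    ∀ d : ℕ, ∀ y : NState p, memBox y M → (∀ k, k ≠ l → y k = x k) →
      (((y l : ℕ) : ℤ) - ((x l : ℕ) : ℤ)).natAbs = d → f y i = f x i := by
  intro d
  induction d with
  | zero =>
    intro y hy hagree hd
    have hyl : y l = x l := Fin.ext (by omega)
    have hyx : y = x := funext fun k => by
      by_cases hk : k = l
      · rw [hk]; exact hyl
      · exact hagree k hk
    rw [hyx]
  | succ d ih =>
    intro y hy hagree hd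
    rcases lt_trichotomy ((y l : ℕ)) ((x l : ℕ)) with hlt | heq | hgt
    · have hbound : (y l : ℕ) + 1 < p l + 1 := by have := (x l).isLt; omega
      set w : Fin (p l + 1) := ⟨(y l : ℕ) + 1, hbound⟩ with hw
      have hwM : w ∈ M l :=
        box_mem_of_between hB (hy l) (hx l)
          (by rw [Fin.le_def]; simp only [hw]; omega) (by rw [Fin.le_def]; simp only [hw]; omega)
      set y' : NState p := Function.update y l w with hy'
      have hy'M : memBox y' M := by
        intro k
        by_cases hk : k = l
        · subst hk; rw [hy', Function.update_self]; exact hwM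
        · rw [hy', Function.update_of_ne hk]; exact hy k
      have h1 : f y i = f y' i := by
        refine step_const hcomp hi hl hy'M hy ?_ (Or.inr rfl) ?_
        · intro k hk; rw [hy', Function.update_of_ne hk]
        · rw [hy', Function.update_self]; simp [hw]
      rw [h1]
      refine ih y' hy'M ?_ ?_
      · intro k hk; rw [hy', Function.update_of_ne hk]; exact hagree k hk
      · rw [hy', Function.update_self]; simp only [hw]; omega
    · exact absurd hd (by omega)
    · have hpos : 0 < (y l : ℕ) := by omega
      set w : Fin (p l + 1) := ⟨(y l : ℕ) - 1, by have := (y l).isLt; omega⟩ with hw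
      have hwM : w ∈ M l :=
        box_mem_of_between hB (hx l) (hy l)
          (by rw [Fin.le_def]; simp only [hw]; omega) (by rw [Fin.le_def]; simp only [hw]; omega)
      set y' : NState p := Function.update y l w with hy'
      have hy'M : memBox y' M := by
        intro k
        by_cases hk : k = l
        · subst hk; rw [hy', Function.update_self]; exact hwM
        · rw [hy', Function.update_of_ne hk]; exact hy k
      have h1 : f y i = f y' i := by
        refine step_const hcomp hi hl hy'M hy ?_ (Or.inl rfl) ?_
        · intro k hk; rw [hy', Function.update_of_ne hk]
        · rw [hy', Function.update_self]; simp only [hw]; omega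
      rw [h1]
      refine ih y' hy'M ?_ ?_
      · intro k hk; rw [hy', Function.update_of_ne hk]; exact hagree k hk
      · rw [hy', Function.update_self]; simp only [hw]; omega

end Aux
section Aux2

variable {n : ℕ} {p : Fin n → ℕ} {f : NState p → NState p} {M : SymState p}
variable {m : ℕ} {V : Fin m → Set (Fin n)}

lemma multi_const (hB : IsBox M)
    (hcomp : ∀ W : Set (Fin n), IsComponent f M W ↔ ∃ j, V j = W)
    {j : Fin m} {i : Fin n} (hi : i ∈ V j)
    {x : NState p} (hx : memBox x M) :
    ∀ d : ℕ, ∀ y : NState p, memBox y M → (∀ l ∈ V j, y l = x l) →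
      (Finset.univ.filter (fun l => y l ≠ x l)).card = d → f y i = f x i := by
  intro d
  induction d with
  | zero =>
    intro y hy hagree hd
    have hall : ∀ k, y k = x k := by
      intro k
      by_contra hk
      have hmem : k ∈ Finset.univ.filter (fun l => y l ≠ x l) := by simp [hk]
      rw [Finset.card_eq_zero] at hd
      rw [hd] at hmem
      exact absurd hmem (Finset.notMem_empty k)
    rw [funext hall]
  | succ d ih =>
    intro y hy hagree hd
    have hne : (Finset.univ.filter (fun l => y l ≠ x l)).Nonempty := by
      rw [← Finset.card_pos, hd]; omega
    obtain ⟨l, hlmem⟩ := hne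
    have hly : y l ≠ x l := by simpa using hlmem
    have hlV : l ∉ V j := fun h => hly (hagree l h)
    set y' : NState p := Function.update y l (x l) with hy'
    have hy'M : memBox y' M := by
      intro k; by_cases hk : k = l
      · subst hk; rw [hy', Function.update_self]; exact hx k
      · rw [hy', Function.update_of_ne hk]; exact hy k
    have h1 : f y i = f y' i := by
      refine coord_const hB hcomp hi hlV hy'M _ y hy ?_ rfl
      intro k hk; rw [hy', Function.update_of_ne hk]
    rw [h1]
    refine ih y' hy'M ?_ ?_
    · intro k hk; by_cases h : k = l
      · subst h; rw [hy', Function.update_self]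
      · rw [hy', Function.update_of_ne h]; exact hagree k hk
    · have hfe : Finset.univ.filter (fun k => y' k ≠ x k)
          = (Finset.univ.filter (fun k => y k ≠ x k)).erase l := by
        ext k
        simp only [Finset.mem_filter, Finset.mem_erase, Finset.mem_univ, true_and]
        by_cases h : k = l
        · subst h; simp [hy', Function.update_self]
        · simp [hy', Function.update_of_ne h, h]
      rw [hfe, Finset.card_erase_of_mem hlmem, hd]
      omega

lemma mod_compute (hM : IsSymSteady f M)
    (hcomp : ∀ W : Set (Fin n), IsComponent f M W ↔ ∃ j, V j = W)
    {j : Fin m} {x : NState p} (hx : memBox x M) (i : V j) :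
    modFun f M (V j) (projV (V j) x) i = f x i.1 := by
  have key : ∀ y ∈ Fintype.piFinset (rhoV M (V j) (projV (V j) x)), f y i.1 = f x i.1 := by
    intro y hy
    rw [Fintype.mem_piFinset] at hy
    have hyM : memBox y M := by
      intro k
      have hk' := hy k
      by_cases hk : k ∈ V j
      · simp only [rhoV, dif_pos hk, Finset.mem_singleton] at hk'
        rw [hk']; exact hx k
      · simpa only [rhoV, dif_neg hk] using hk'
    have hagree : ∀ l ∈ V j, y l = x l := by
      intro l hl
      have hl' := hy l
      simpa only [rhoV, dif_pos hl, Finset.mem_singleton, projV] using hl'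
    exact multi_const hM.1 hcomp i.2 hx _ y hyM hagree rfl
  have hxmem : x ∈ Fintype.piFinset (rhoV M (V j) (projV (V j) x)) := by
    rw [Fintype.mem_piFinset]
    intro k
    by_cases hk : k ∈ V j
    · simp only [rhoV, dif_pos hk, Finset.mem_singleton]; rfl
    · simp only [rhoV, dif_neg hk]; exact hx k
  have hinf : (Fintype.piFinset (rhoV M (V j) (projV (V j) x))).inf (fun y => f y i.1)
      = f x i.1 :=
    le_antisymm (Finset.inf_le hxmem) (Finset.le_inf fun y hy => (key y hy).ge)
  have hsup : (Fintype.piFinset (rhoV M (V j) (projV (V j) x))).sup (fun y => f y i.1)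
      = f x i.1 :=
    le_antisymm (Finset.sup_le fun y hy => (key y hy).le)
      (Finset.le_sup (f := fun y => f y i.1) hxmem)
  show (Fop f (rhoV M (V j) (projV (V j) x)) i.1).inf id = f x i.1
  simp only [Fop, hinf, hsup, Finset.Icc_self, Finset.inf_singleton, id]

lemma lift_path (hM : IsSymSteady f M)
    (hcomp : ∀ W : Set (Fin n), IsComponent f M W ↔ ∃ j, V j = W)
    (j : Fin m) {z z' : MState p (V j)}
    (hpath : Relation.ReflTransGen (ModAsyncEdge M (V j) (modFun f M (V j))) z z') :
    ∀ x : NState p, memBox x M → projV (V j) x = z →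
    ∃ x' : NState p, memBox x' M ∧ projV (V j) x' = z' ∧ (∀ l, l ∉ V j → x' l = x l) ∧
      Relation.ReflTransGen (AsyncEdge f) x x' := by
  induction hpath using Relation.ReflTransGen.head_induction_on with
  | refl =>
    intro x hx hz
    exact ⟨x, hx, hz, fun _ _ => rfl, Relation.ReflTransGen.refl⟩
  | head hstep _ ih =>
    rename_i a c _
    intro x hx hz
    subst hz
    obtain ⟨hzbox, hcbox, hcase⟩ := hstep
    rcases hcase with ⟨hc, _⟩ | ⟨i, hgi, hagree, hdir⟩
    · exact ih x hx hc.symm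
    · set x1 : NState p := Function.update x i.1 (c i) with hx1
      have hx1M : memBox x1 M := by
        intro k; by_cases hk : k = i.1
        · subst hk; rw [hx1, Function.update_self]; exact hcbox i
        · rw [hx1, Function.update_of_ne hk]; exact hx k
      have hproj : projV (V j) x1 = c := by
        funext l
        by_cases hl : l = i
        · subst hl; show x1 l.1 = c l; rw [hx1, Function.update_self]
        · have hl1 : l.1 ≠ i.1 := fun h => hl (Subtype.ext h)
          show x1 l.1 = c l
          rw [hx1, Function.update_of_ne hl1]
          exact (hagree l hl).symm
      have hmod : modFun f M (V j) (projV (V j) x) i = f x i.1 :=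
        mod_compute hM hcomp hx i
      rw [hmod] at hgi hdir
      have hedge : AsyncEdge f x x1 := by
        refine Or.inr ⟨i.1, hgi, ?_, ?_⟩
        · intro k hk; rw [hx1, Function.update_of_ne hk]
        · rcases hdir with ⟨h1, h2⟩ | ⟨h1, h2⟩
          · left
            refine ⟨h1, ?_⟩
            rw [hx1, Function.update_self]
            exact h2
          · right
            refine ⟨h1, ?_⟩
            rw [hx1, Function.update_self]
            exact h2
      obtain ⟨x', hx'M, hx'proj, hx'off, hx'path⟩ := ih x1 hx1M hproj
      refine ⟨x', hx'M, hx'proj, ?_, Relation.ReflTransGen.head hedge hx'path⟩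
      intro l hl
      rw [hx'off l hl, hx1, Function.update_of_ne (fun h : l = i.1 => hl (h ▸ i.2))]

end Aux2
open Classical in
/-- Interpolation between `a` and `b`: agree with `b` on components `V j`, `j < k`,
and with `a` elsewhere. -/
noncomputable def mix {n : ℕ} {p : Fin n → ℕ} {m : ℕ} (V : Fin m → Set (Fin n))
    (a b : NState p) (k : ℕ) : NState p :=
  fun i => if ∃ j : Fin m, (j : ℕ) < k ∧ i ∈ V j then b i else a i
/-- with `V 0, …, V (m-1)` the components of `G^θ(M)` and `A j` an
attractor of `S(f^{Z_j})` for each `j`, the product set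
`A = {a ∈ M | π^{Z_j}(a) ∈ A_j for all j}` is an attractor of `S(f)`. -/
theorem stmt14 {n : ℕ} {p : Fin n → ℕ} (f : NState p → NState p) (M : SymState p)
    (hM : IsSymSteady f M) (m : ℕ) (V : Fin m → Set (Fin n))
    (hVinj : Function.Injective V)
    (hcomp : ∀ W : Set (Fin n), IsComponent f M W ↔ ∃ j, V j = W)
    (A : ∀ j : Fin m, Set (MState p (V j)))
    (hA : ∀ j, IsModAttractor M (V j) (modFun f M (V j)) (A j)) :
    IsAttractor f {a : NState p | memBox a M ∧ ∀ j, projV (V j) a ∈ A j} := by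
  classical
  have hz : ∀ j, ∃ w, w ∈ A j := fun j => (hA j).1
  choose z hzA using hz
  -- Nonemptiness
  have hAne : Set.Nonempty {a : NState p | memBox a M ∧ ∀ j, projV (V j) a ∈ A j} := by
    refine ⟨fun i => if h : ∃ j, i ∈ V j then z h.choose ⟨i, h.choose_spec⟩
      else (M i).min' (box_nonempty hM.1 i), ?_, ?_⟩
    · intro i
      by_cases h : ∃ j, i ∈ V j
      · show (if h : ∃ j, i ∈ V j then z h.choose ⟨i, h.choose_spec⟩
          else (M i).min' (box_nonempty hM.1 i)) ∈ M i
        rw [dif_pos h]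
        exact (hA h.choose).2.1 _ (hzA h.choose) ⟨i, h.choose_spec⟩
      · show (if h : ∃ j, i ∈ V j then z h.choose ⟨i, h.choose_spec⟩
          else (M i).min' (box_nonempty hM.1 i)) ∈ M i
        rw [dif_neg h]
        exact Finset.min'_mem _ _
    · intro j
      have hpr : projV (V j) (fun i => if h : ∃ j, i ∈ V j then z h.choose ⟨i, h.choose_spec⟩
          else (M i).min' (box_nonempty hM.1 i)) = z j := by
        funext l
        have h : ∃ j', l.1 ∈ V j' := ⟨j, l.2⟩
        show (if h : ∃ j', l.1 ∈ V j' then z h.choose ⟨l.1, h.choose_spec⟩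
          else (M l.1).min' (box_nonempty hM.1 l.1)) = z j l
        rw [dif_pos h]
        have key : ∀ (j' k' : Fin m), j' = k' → ∀ (i : Fin n) (hj' : i ∈ V j')
            (hk' : i ∈ V k'), z j' ⟨i, hj'⟩ = z k' ⟨i, hk'⟩ := by
          rintro j' k' rfl i hj' hk'; rfl
        exact key h.choose j (comp_disjoint hVinj hcomp h.choose_spec l.2)
          l.1 h.choose_spec l.2
      rw [hpr]
      exact hzA j
  -- Trap property
  have htrap : ∀ a ∈ {a : NState p | memBox a M ∧ ∀ j, projV (V j) a ∈ A j},
      ∀ a', AsyncEdge f a a' → a' ∈ {a : NState p | memBox a M ∧ ∀ j, projV (V j) a ∈ A j} := by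
    intro a ha a' hedge
    rcases hedge with ⟨rfl, _⟩ | ⟨i, hfi, hoff, hdir⟩
    · exact ha
    · have haM := ha.1
      have hfM : f a i ∈ M i := fx_mem hM haM i
      have ha'M : memBox a' M := by
        intro k
        by_cases hk : k = i
        · subst hk
          rcases hdir with ⟨h1, h2⟩ | ⟨h1, h2⟩
          · have h1' := Fin.lt_def.mp h1
            refine box_mem_of_between hM.1 (haM k) hfM ?_ ?_ <;> rw [Fin.le_def] <;> omega
          · have h1' := Fin.lt_def.mp h1
            refine box_mem_of_between hM.1 hfM (haM k) ?_ ?_ <;> rw [Fin.le_def] <;> omega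
        · rw [hoff k hk]; exact haM k
      have hiJ : i ∈ JSet M := by
        by_contra h
        exact hfi (frozen hM haM h)
      obtain ⟨j, hij⟩ := comp_cover hcomp hiJ
      have hmod := mod_compute hM hcomp haM (⟨i, hij⟩ : V j)
      have hmedge : ModAsyncEdge M (V j) (modFun f M (V j))
          (projV (V j) a) (projV (V j) a') := by
        refine ⟨fun l => haM l.1, fun l => ha'M l.1, Or.inr ⟨⟨i, hij⟩, ?_, ?_, ?_⟩⟩
        · rw [hmod]; exact hfi
        · intro l hl
          have hl1 : l.1 ≠ i := fun h => hl (Subtype.ext h)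
          exact hoff l.1 hl1
        · rw [hmod]; exact hdir
      have h1 : projV (V j) a' ∈ A j := (hA j).2.2.1 _ (ha.2 j) _ hmedge
      refine ⟨ha'M, fun k => ?_⟩
      by_cases hk : k = j
      · subst hk; exact h1
      · have hpr : projV (V k) a' = projV (V k) a := by
          funext l
          have hl1 : l.1 ≠ i := by
            intro h
            exact hk (comp_disjoint hVinj hcomp (h ▸ l.2) hij)
          exact hoff l.1 hl1
        rw [hpr]
        exact ha.2 k
  -- Connectivity
  have hpath : ∀ a ∈ {a : NState p | memBox a M ∧ ∀ j, projV (V j) a ∈ A j},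
      ∀ b ∈ {a : NState p | memBox a M ∧ ∀ j, projV (V j) a ∈ A j},
      Relation.ReflTransGen (AsyncEdge f) a b := by
    intro a ha b hb
    have hmixM : ∀ k, memBox (mix V a b k) M := by
      intro k i
      simp only [mix]
      by_cases h : ∃ j : Fin m, (j : ℕ) < k ∧ i ∈ V j
      · rw [if_pos h]; exact hb.1 i
      · rw [if_neg h]; exact ha.1 i
    have hstep : ∀ k : ℕ, ∀ hk : k < m,
        Relation.ReflTransGen (AsyncEdge f) (mix V a b k) (mix V a b (k + 1)) := by
      intro k hk
      set j : Fin m := ⟨k, hk⟩ with hj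
      have hproj : projV (V j) (mix V a b k) = projV (V j) a := by
        funext l
        have hcond : ¬ ∃ j' : Fin m, (j' : ℕ) < k ∧ l.1 ∈ V j' := by
          rintro ⟨j', hj', hmem⟩
          have he : j' = j := comp_disjoint hVinj hcomp hmem l.2
          rw [he, hj] at hj'
          simp at hj'
        show mix V a b k l.1 = a l.1
        simp only [mix]
        rw [if_neg hcond]
      have hmpath := (hA j).2.2.2 _ (ha.2 j) _ (hb.2 j)
      obtain ⟨x', hx'M, hx'proj, hx'off, hx'path⟩ :=
        lift_path hM hcomp j hmpath (mix V a b k) (hmixM k) hproj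
      have hx'eq : x' = mix V a b (k + 1) := by
        funext i
        by_cases hiV : i ∈ V j
        · have hbi : x' i = b i := congrFun hx'proj ⟨i, hiV⟩
          rw [hbi]
          simp only [mix]
          rw [if_pos ⟨j, by simp [hj], hiV⟩]
        · rw [hx'off i hiV]
          simp only [mix]
          have hiff : (∃ j' : Fin m, (j' : ℕ) < k + 1 ∧ i ∈ V j')
              ↔ (∃ j' : Fin m, (j' : ℕ) < k ∧ i ∈ V j') := by
            constructor
            · rintro ⟨j', hj', hmem⟩
              refine ⟨j', ?_, hmem⟩
              rcases Nat.lt_succ_iff_lt_or_eq.mp hj' with h | h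
              · exact h
              · exfalso
                apply hiV
                have he : j' = j := by rw [hj]; exact Fin.ext h
                rwa [he] at hmem
            · rintro ⟨j', hj', hmem⟩
              exact ⟨j', by omega, hmem⟩
          rw [if_congr hiff rfl rfl]
      rw [← hx'eq]
      exact hx'path
    have hall : ∀ k : ℕ, k ≤ m →
        Relation.ReflTransGen (AsyncEdge f) (mix V a b 0) (mix V a b k) := by
      intro k
      induction k with
      | zero => intro _; exact Relation.ReflTransGen.refl
      | succ k ih =>
        intro hk
        exact (ih (by omega)).trans (hstep k (by omega))
    have h0 : mix V a b 0 = a := by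
      funext i
      simp only [mix]
      rw [if_neg (by rintro ⟨j, hj, _⟩; omega)]
    have hm' : mix V a b m = b := by
      funext i
      simp only [mix]
      by_cases hiJ : i ∈ JSet M
      · obtain ⟨j, hj⟩ := comp_cover hcomp hiJ
        rw [if_pos ⟨j, j.isLt, hj⟩]
      · have hcard : (M i).card ≤ 1 := not_lt.mp hiJ
        have hab : a i = b i := Finset.card_le_one.mp hcard _ (ha.1 i) _ (hb.1 i)
        by_cases h : ∃ j : Fin m, (j : ℕ) < m ∧ i ∈ V j
        · rw [if_pos h]
        · rw [if_neg h]; exact hab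
    have hfin := hall m le_rfl
    rwa [h0, hm'] at hfin
  exact ⟨⟨hAne, htrap⟩, hpath⟩

end DRN
end

section
/- Let f be a network, M a symbolic steady state of f, and Z_1,…,Z_m the components of G^θ(M). Every attractor A of S(f) with A ⊆ M is a product of attractors of the module state transition graphs: there exist attractors A_j of S(f^{Z_j}), j ∈ {1,…,m}, such that A = {a ∈ M | π^{Z_j}(a) ∈ A_j for all j ∈ {1,…,m}}. -/
/-! Discrete regulatory networks (Siebert), shared definitions. -/

open Finset

namespace DRN

section Aux

variable {n : ℕ} {p : Fin n → ℕ}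

lemma mem_piFinset_iff (M : SymState p) (x : NState p) :
    x ∈ Fintype.piFinset M ↔ memBox x M := by
  simp [Fintype.mem_piFinset, memBox]

/-- `f` maps `M` into `M` componentwise. -/
lemma f_mem (f : NState p → NState p) (M : SymState p)
    (hM : Fop f M = M) {x : NState p} (hx : memBox x M) (i : Fin n) :
    f x i ∈ M i := by
  have hx' : x ∈ Fintype.piFinset M := (mem_piFinset_iff M x).2 hx
  have h1 : (Fintype.piFinset M).inf (fun y => f y i) ≤ f x i :=
    Finset.inf_le hx'
  have h2 : f x i ≤ (Fintype.piFinset M).sup (fun y => f y i) :=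
    Finset.le_sup (f := fun y => f y i) hx'
  have : f x i ∈ Fop f M i := Finset.mem_Icc.2 ⟨h1, h2⟩
  rwa [hM] at this

/-- Outside `J(M)`, components are frozen on `M`. -/
lemma f_fixed (f : NState p → NState p) (M : SymState p)
    (hM : Fop f M = M) {x : NState p} (hx : memBox x M) {i : Fin n}
    (hi : i ∉ JSet M) : f x i = x i := by
  have hcard : (M i).card ≤ 1 := by
    by_contra h
    exact hi (by simpa [JSet] using lt_of_not_ge h)
  exact Finset.card_le_one.1 hcard _ (f_mem f M hM hx i) _ (hx i)

/-- anything between two members of an interval is a member -/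
lemma interval_between (M : SymState p) (hbox : IsBox M) {i : Fin n}
    {a b : Fin (p i + 1)} (ha : a ∈ M i) (hb : b ∈ M i) {v : ℕ}
    (h1 : (a : ℕ) ≤ v) (h2 : v ≤ (b : ℕ)) :
    ∃ c : Fin (p i + 1), c ∈ M i ∧ (c : ℕ) = v := by
  obtain ⟨l, u, _, hI⟩ := hbox i
  rw [hI] at ha hb ⊢
  rw [Finset.mem_Icc] at ha hb
  have hla : (l : ℕ) ≤ (a : ℕ) := ha.1
  have hbu : (b : ℕ) ≤ (u : ℕ) := hb.2
  have hv : v < p i + 1 := by have := u.isLt; omega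
  refine ⟨⟨v, hv⟩, Finset.mem_Icc.2 ⟨?_, ?_⟩, rfl⟩
  · show (l : ℕ) ≤ v; omega
  · show v ≤ (u : ℕ); omega

lemma two_mem_JSet (M : SymState p) {i : Fin n} {a b : Fin (p i + 1)}
    (ha : a ∈ M i) (hb : b ∈ M i) (hab : a ≠ b) : i ∈ JSet M :=
  Finset.one_lt_card.2 ⟨a, ha, b, hb, hab⟩

/-- ThetaConn is "symmetric": components containing a common point coincide. -/
lemma thetaConn_symm (f : NState p → NState p) (M : SymState p) :
    Symmetric (Relation.ReflTransGen fun a b => ThetaAdj f M a b ∨ ThetaAdj f M b a) :=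
  have : Std.Symm (fun a b => ThetaAdj f M a b ∨ ThetaAdj f M b a) := ⟨fun _ _ h => h.symm⟩
  fun a b h => Relation.ReflTransGen.stdSymm.symm a b h

/-- Membership in a component is preserved by adjacency. -/
lemma component_closed (f : NState p → NState p) (M : SymState p)
    {W : Set (Fin n)} (hW : IsComponent f M W) {i k : Fin n}
    (hi : i ∈ W) (hk : k ∈ JSet M) (hadj : ThetaAdj f M k i) : k ∈ W := by
  obtain ⟨i0, hi0, rfl⟩ := hW
  refine ⟨hk, ?_⟩
  exact Relation.ReflTransGen.tail hi.2 (Or.inr hadj)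

lemma component_subset_JSet (f : NState p → NState p) (M : SymState p)
    {W : Set (Fin n)} (hW : IsComponent f M W) : W ⊆ JSet M := by
  obtain ⟨i0, hi0, rfl⟩ := hW
  exact fun j hj => hj.1

/-- Key independence lemma: on `M`, `f_i` with `i` in component `W` depends
only on the coordinates in `W`. -/
lemma f_indep (f : NState p → NState p) (M : SymState p) (hbox : IsBox M)
    {W : Set (Fin n)} (hW : IsComponent f M W) {i : Fin n} (hi : i ∈ W) :
    ∀ x y : NState p, memBox x M → memBox y M → (∀ k ∈ W, x k = y k) →
      f x i = f y i := by
  suffices H : ∀ d : ℕ, ∀ x y : NState p, memBox x M → memBox y M →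
      (∀ k ∈ W, x k = y k) →
      (∑ k, (((x k : ℕ) : ℤ) - ((y k : ℕ) : ℤ)).natAbs) = d → f x i = f y i by
    intro x y hx hy hagree
    exact H _ x y hx hy hagree rfl
  intro d
  induction d using Nat.strong_induction_on with
  | _ d ih =>
    intro x y hx hy hagree hd
    by_cases hxy : ∀ k, x k = y k
    · have : x = y := funext hxy
      rw [this]
    · push_neg at hxy
      obtain ⟨k, hk⟩ := hxy
      have hkW : k ∉ W := fun h => hk (hagree k h)
      have hkJ : k ∈ JSet M := two_mem_JSet M (hx k) (hy k) hk
      -- step x k one unit toward y k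
      have hne : (x k : ℕ) ≠ (y k : ℕ) := fun h => hk (Fin.ext h)
      have hstep : ∃ c : Fin (p k + 1), c ∈ M k ∧
          ((((c : ℕ) : ℤ) = ((x k : ℕ) : ℤ) + 1 ∧ (x k : ℕ) < (y k : ℕ)) ∨
           (((c : ℕ) : ℤ) = ((x k : ℕ) : ℤ) - 1 ∧ (y k : ℕ) < (x k : ℕ))) := by
        rcases Nat.lt_or_ge (x k : ℕ) (y k : ℕ) with h | h
        · obtain ⟨c, hc, hc2⟩ := interval_between M hbox (hx k) (hy k)
            (Nat.le_succ _) h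
          exact ⟨c, hc, Or.inl ⟨by exact_mod_cast hc2, h⟩⟩
        · have h' : (y k : ℕ) < (x k : ℕ) := lt_of_le_of_ne h (Ne.symm hne)
          obtain ⟨c, hc, hc2⟩ := interval_between M hbox (hy k) (hx k)
            (by omega : (y k : ℕ) ≤ (x k : ℕ) - 1) (by omega)
          exact ⟨c, hc, Or.inr ⟨by rw [hc2]; omega, h'⟩⟩
      obtain ⟨c, hcM, hcval⟩ := hstep
      -- x' : x with coordinate k moved one step toward y k
      set x' : NState p := Function.update x k c with hx'def
      have hx'M : memBox x' M := by
        intro l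
        by_cases hl : l = k
        · subst hl; simpa [hx'def] using hcM
        · simpa [hx'def, Function.update_of_ne hl] using hx l
      have hx'k : x' k = c := by simp [hx'def]
      have hx'ne : ∀ l, l ≠ k → x' l = x l := fun l hl => Function.update_of_ne hl _ _
      -- f x i = f x' i, else there would be a Θ-edge from k to i
      have hfeq : f x i = f x' i := by
        by_contra hne'
        have hcast : (((f x' i : ℕ) : ℤ) - ((f x i : ℕ) : ℤ)) ≠ 0 := by
          intro h0
          exact hne' (Fin.ext (by omega)).symm
        set c' : ℤ := if (x k : ℕ) < (y k : ℕ) then 1 else -1 with hc'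
        have hcval' : ((x' k : ℕ) : ℤ) = ((x k : ℕ) : ℤ) + c' := by
          rcases hcval with ⟨h1, h2⟩ | ⟨h1, h2⟩
          · rw [hx'k, hc', if_pos h2]; exact h1
          · rw [hx'k, hc', if_neg (by omega)]; omega
        have hsign : Int.sign (((f x' i : ℕ) : ℤ) - ((f x i : ℕ) : ℤ)) = 1 ∨
            Int.sign (((f x' i : ℕ) : ℤ) - ((f x i : ℕ) : ℤ)) = -1 := by
          rcases lt_trichotomy (((f x' i : ℕ) : ℤ) - ((f x i : ℕ) : ℤ)) 0 with h'|h'|h'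
          exacts [Or.inr (Int.sign_eq_neg_one_of_neg h'), absurd h' hcast,
            Or.inl (Int.sign_eq_one_of_pos h')]
        have hc'or : c' = 1 ∨ c' = -1 := by
          by_cases h2 : (x k : ℕ) < (y k : ℕ) <;> simp [hc', h2]
        have hadj : ThetaAdj f M k i := by
          refine ⟨Int.sign (((f x' i : ℕ) : ℤ) - ((f x i : ℕ) : ℤ)) * c', ?_, hkJ,
            component_subset_JSet f M hW hi, x, x', hx, hx'M, c', hc'or, hx'ne, hcval', rfl⟩
          rcases hsign with h | h <;> rcases hc'or with h2 | h2 <;> rw [h, h2] <;> simp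
        exact hkW (component_closed f M hW hi hkJ hadj)
      -- recurse
      have hagree' : ∀ l ∈ W, x' l = y l := by
        intro l hl
        rw [hx'ne l (fun h => hkW (h ▸ hl))]; exact hagree l hl
      have hdist : (∑ l, (((x' l : ℕ) : ℤ) - ((y l : ℕ) : ℤ)).natAbs) = d - 1 ∧ 0 < d := by
        have hsplit : ∀ z : NState p,
            (∑ l, (((z l : ℕ) : ℤ) - ((y l : ℕ) : ℤ)).natAbs) =
            (((z k : ℕ) : ℤ) - ((y k : ℕ) : ℤ)).natAbs +
              ∑ l ∈ Finset.univ.erase k, (((z l : ℕ) : ℤ) - ((y l : ℕ) : ℤ)).natAbs := by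
          intro z
          rw [← Finset.add_sum_erase _ _ (Finset.mem_univ k)]
        have he : ∑ l ∈ Finset.univ.erase k, (((x' l : ℕ) : ℤ) - ((y l : ℕ) : ℤ)).natAbs
            = ∑ l ∈ Finset.univ.erase k, (((x l : ℕ) : ℤ) - ((y l : ℕ) : ℤ)).natAbs := by
          refine Finset.sum_congr rfl fun l hl => ?_
          rw [hx'ne l (Finset.ne_of_mem_erase hl)]
        have h1 := hsplit x
        have h2 := hsplit x'
        rw [hd] at h1
        have hterm : (((x' k : ℕ) : ℤ) - ((y k : ℕ) : ℤ)).natAbs + 1 =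
            (((x k : ℕ) : ℤ) - ((y k : ℕ) : ℤ)).natAbs := by
          rw [hx'k]
          rcases hcval with ⟨hc1, hc2⟩ | ⟨hc1, hc2⟩ <;> omega
        constructor
        · omega
        · omega
      have := ih (d-1) (by omega) x' y hx'M hy hagree' hdist.1
      rw [hfeq, this]

lemma proj_memBoxV {M : SymState p} {W : Set (Fin n)} {x : NState p}
    (hx : memBox x M) : memBoxV M W (projV W x) :=
  fun i => hx i.1

lemma mem_rho_piFinset {M : SymState p} {W : Set (Fin n)} {x y : NState p}
    (hx : memBox x M) :
    y ∈ Fintype.piFinset (rhoV M W (projV W x)) ↔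
      (memBox y M ∧ ∀ l ∈ W, y l = x l) := by
  rw [Fintype.mem_piFinset]
  constructor
  · intro h
    constructor
    · intro l
      have := h l
      by_cases hl : l ∈ W
      · rw [rhoV, dif_pos hl] at this
        simp only [Finset.mem_singleton] at this
        rw [this]; exact hx l
      · rwa [rhoV, dif_neg hl] at this
    · intro l hl
      have := h l
      rw [rhoV, dif_pos hl] at this
      simpa [projV] using this
  · rintro ⟨hyM, hagree⟩ l
    by_cases hl : l ∈ W
    · rw [rhoV, dif_pos hl]
      simp [hagree l hl, projV]
    · rw [rhoV, dif_neg hl]; exact hyM l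

/-- The module function computes `f` componentwise on `M`. -/
lemma modFun_eq (f : NState p → NState p) (M : SymState p) (hbox : IsBox M)
    {W : Set (Fin n)} (hW : IsComponent f M W) {x : NState p}
    (hx : memBox x M) (i : W) :
    modFun f M W (projV W x) i = f x i.1 := by
  have hxmem : x ∈ Fintype.piFinset (rhoV M W (projV W x)) :=
    (mem_rho_piFinset hx).2 ⟨hx, fun _ _ => rfl⟩
  have hconst : ∀ y ∈ Fintype.piFinset (rhoV M W (projV W x)), f y i.1 = f x i.1 := by
    intro y hy
    obtain ⟨hyM, hagree⟩ := (mem_rho_piFinset hx).1 hy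
    exact f_indep f M hbox hW i.2 y x hyM hx hagree
  have hinf : (Fintype.piFinset (rhoV M W (projV W x))).inf (fun y => f y i.1)
      = f x i.1 :=
    le_antisymm (Finset.inf_le hxmem)
      (Finset.le_inf fun y hy => (hconst y hy).ge)
  have hsup : (Fintype.piFinset (rhoV M W (projV W x))).sup (fun y => f y i.1)
      = f x i.1 :=
    le_antisymm (Finset.sup_le fun y hy => (hconst y hy).le)
      (Finset.le_sup (f := fun y => f y i.1) hxmem)
  show (Fop f (rhoV M W (projV W x)) i.1).inf id = f x i.1
  rw [Fop]
  simp only [hinf, hsup, Finset.Icc_self]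
  simp

/-- Projecting an edge of `S(f)` inside `M` to a module. -/
lemma edge_project (f : NState p → NState p) (M : SymState p) (hbox : IsBox M)
    {W : Set (Fin n)} (hW : IsComponent f M W) {x x' : NState p}
    (hx : memBox x M) (hx' : memBox x' M) (he : AsyncEdge f x x') :
    projV W x' = projV W x ∨
      ModAsyncEdge M W (modFun f M W) (projV W x) (projV W x') := by
  rcases he with ⟨rfl, _⟩ | ⟨i, hfi, hoth, hdir⟩
  · exact Or.inl rfl
  · by_cases hiW : i ∈ W
    · refine Or.inr ⟨proj_memBoxV hx, proj_memBoxV hx', Or.inr ⟨⟨i, hiW⟩, ?_, ?_, ?_⟩⟩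
      · rw [modFun_eq f M hbox hW hx]; exact hfi
      · intro l hl
        exact hoth l.1 (fun h => hl (Subtype.ext h))
      · rw [modFun_eq f M hbox hW hx]
        exact hdir
    · refine Or.inl (funext fun l => ?_)
      exact hoth l.1 (fun h => hiW (h ▸ l.2))

/-- Lifting a module edge to a path of `S(f)`. -/
lemma edge_lift (f : NState p → NState p) (M : SymState p) (hbox : IsBox M)
    {W : Set (Fin n)} (hW : IsComponent f M W) {x : NState p}
    (hx : memBox x M) {z' : MState p W}
    (he : ModAsyncEdge M W (modFun f M W) (projV W x) z') :
    ∃ x' : NState p, Relation.ReflTransGen (AsyncEdge f) x x' ∧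
      projV W x' = z' ∧ ∀ l, l ∉ W → x' l = x l := by
  obtain ⟨hz, hz', hcase⟩ := he
  rcases hcase with ⟨hzz, _⟩ | ⟨i, hgi, hoth, hdir⟩
  · exact ⟨x, Relation.ReflTransGen.refl, hzz.symm ▸ rfl, fun _ _ => rfl⟩
  · set x' : NState p := Function.update x i.1 (z' i) with hx'def
    have hx'i : x' i.1 = z' i := by simp [hx'def]
    have hx'ne : ∀ l, l ≠ i.1 → x' l = x l := fun l hl => Function.update_of_ne hl _ _
    have hproj : projV W x' = z' := by
      funext l
      by_cases hl : l = i
      · subst hl; exact hx'i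
      · show x' l.1 = z' l
        rw [hx'ne l.1 (fun h => hl (Subtype.ext h)), hoth l hl]
        rfl
    refine ⟨x', Relation.ReflTransGen.single ?_, hproj, fun l hl => hx'ne l (fun h => hl (h ▸ i.2))⟩
    refine Or.inr ⟨i.1, ?_, hx'ne, ?_⟩
    · rw [← modFun_eq f M hbox hW hx i]; exact hgi
    · rw [modFun_eq f M hbox hW hx i] at hdir
      rw [hx'i]
      exact hdir

/-- Distinct components are disjoint. -/
lemma components_eq (f : NState p → NState p) (M : SymState p)
    {W W' : Set (Fin n)} (hW : IsComponent f M W) (hW' : IsComponent f M W')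
    {i : Fin n} (hi : i ∈ W) (hi' : i ∈ W') : W = W' := by
  obtain ⟨a, ha, rfl⟩ := hW
  obtain ⟨b, hb, rfl⟩ := hW'
  have hai : ThetaConn f M a i := hi.2
  have hbi : ThetaConn f M b i := hi'.2
  have hab : ThetaConn f M a b :=
    Relation.ReflTransGen.trans hai (thetaConn_symm f M hbi)
  have hba : ThetaConn f M b a :=
    Relation.ReflTransGen.trans hbi (thetaConn_symm f M hai)
  ext k
  exact ⟨fun hk => ⟨hk.1, Relation.ReflTransGen.trans hba hk.2⟩,
    fun hk => ⟨hk.1, Relation.ReflTransGen.trans hab hk.2⟩⟩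

end Aux

/-- with `V 0, …, V (m-1)` the components of `G^θ(M)`, every attractor
`A ⊆ M` of `S(f)` is a product of attractors of the module state transition graphs. -/
theorem stmt15 {n : ℕ} {p : Fin n → ℕ} (f : NState p → NState p) (M : SymState p)
    (hM : IsSymSteady f M) (m : ℕ) (V : Fin m → Set (Fin n))
    (hVinj : Function.Injective V)
    (hcomp : ∀ W : Set (Fin n), IsComponent f M W ↔ ∃ j, V j = W)
    (A : Set (NState p)) (hA : IsAttractor f A) (hAM : ∀ a ∈ A, memBox a M) :
    ∃ B : ∀ j : Fin m, Set (MState p (V j)),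
      (∀ j, IsModAttractor M (V j) (modFun f M (V j)) (B j)) ∧
      A = {a : NState p | memBox a M ∧ ∀ j, projV (V j) a ∈ B j} := by
  obtain ⟨hbox, hnreg, hFop⟩ := hM
  obtain ⟨⟨hAne, htrap⟩, hpath⟩ := hA
  have hWcomp : ∀ j, IsComponent f M (V j) := fun j => (hcomp (V j)).2 ⟨j, rfl⟩
  have htrap' : ∀ x ∈ A, ∀ y, Relation.ReflTransGen (AsyncEdge f) x y → y ∈ A := by
    intro x hx y hxy
    induction hxy with
    | refl => exact hx
    | tail hab e ih => exact htrap _ ih _ e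
  set B : ∀ j : Fin m, Set (MState p (V j)) := fun j => projV (V j) '' A with hB
  have hprojpath : ∀ j, ∀ x ∈ A, ∀ y, Relation.ReflTransGen (AsyncEdge f) x y →
      Relation.ReflTransGen (ModAsyncEdge M (V j) (modFun f M (V j)))
        (projV (V j) x) (projV (V j) y) := by
    intro j x hxA y hxy
    induction hxy with
    | refl => exact .refl
    | @tail b c hab e ih =>
      have hbA : b ∈ A := htrap' x hxA b hab
      have hcA : c ∈ A := htrap _ hbA _ e
      rcases edge_project f M hbox (hWcomp j) (hAM b hbA) (hAM c hcA) e with h | h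
      · rw [h]; exact ih
      · exact ih.tail h
  have hattr : ∀ j, IsModAttractor M (V j) (modFun f M (V j)) (B j) := by
    intro j
    refine ⟨hAne.image _, ?_, ?_, ?_⟩
    · rintro z ⟨a, haA, rfl⟩; exact proj_memBoxV (hAM a haA)
    · rintro z ⟨a, haA, rfl⟩ z' he
      obtain ⟨x', hpath', hproj, _⟩ := edge_lift f M hbox (hWcomp j) (hAM a haA) he
      exact ⟨x', htrap' a haA x' hpath', hproj⟩
    · rintro z ⟨a, haA, rfl⟩ z' ⟨b, hbA, rfl⟩
      exact hprojpath j a haA b (hpath a haA b hbA)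
  refine ⟨B, hattr, ?_⟩
  apply Set.eq_of_subset_of_subset
  · intro a haA
    exact ⟨hAM a haA, fun j => ⟨a, haA, rfl⟩⟩
  · rintro a ⟨haM, haB⟩
    have key : ∀ s : Finset (Fin m), ∃ b ∈ A, ∀ j ∈ s, projV (V j) b = projV (V j) a := by
      intro s
      induction s using Finset.induction_on with
      | empty => obtain ⟨b, hb⟩ := hAne; exact ⟨b, hb, by simp⟩
      | @insert j s hj ih =>
        obtain ⟨b, hbA, hbs⟩ := ih
        obtain ⟨c, hcA, hc⟩ := haB j
        have hpathj : Relation.ReflTransGen (ModAsyncEdge M (V j) (modFun f M (V j)))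
            (projV (V j) b) (projV (V j) a) := by
          rw [← hc]
          exact hprojpath j b hbA c (hpath b hbA c hcA)
        have hlift : ∀ z z',
            Relation.ReflTransGen (ModAsyncEdge M (V j) (modFun f M (V j))) z z' →
            ∀ x ∈ A, projV (V j) x = z → ∃ x' ∈ A, projV (V j) x' = z' ∧
              ∀ l, l ∉ V j → x' l = x l := by
          intro z z' hzz'
          induction hzz' with
          | refl => exact fun x hx hxz => ⟨x, hx, hxz, fun _ _ => rfl⟩
          | @tail u w huv e ih2 =>
            intro x hx hxz
            obtain ⟨x1, hx1A, hx1u, hx1fix⟩ := ih2 x hx hxz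
            obtain ⟨x2, hp2, hx2w, hx2fix⟩ :=
              edge_lift f M hbox (hWcomp j) (hAM x1 hx1A) (hx1u.symm ▸ e)
            exact ⟨x2, htrap' x1 hx1A x2 hp2, hx2w,
              fun l hl => (hx2fix l hl).trans (hx1fix l hl)⟩
        obtain ⟨b', hb'A, hb'j, hb'fix⟩ := hlift _ _ hpathj b hbA rfl
        refine ⟨b', hb'A, ?_⟩
        intro j' hj'
        rcases Finset.mem_insert.1 hj' with rfl | hj's
        · exact hb'j
        · have hne : j' ≠ j := fun h => hj (h ▸ hj's)
          have hdisj : ∀ i, i ∈ V j' → i ∉ V j := fun i hi hi' =>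
            hne (hVinj (components_eq f M (hWcomp j') (hWcomp j) hi hi'))
          rw [← hbs j' hj's]
          funext l
          exact hb'fix l.1 (hdisj l.1 l.2)
    obtain ⟨b, hbA, hbagree⟩ := key Finset.univ
    have hba : b = a := by
      funext l
      by_cases hl : l ∈ JSet M
      · have hWl : IsComponent f M {k | k ∈ JSet M ∧ ThetaConn f M l k} := ⟨l, hl, rfl⟩
        obtain ⟨j, hVl⟩ := (hcomp _).1 hWl
        have hlj : l ∈ V j := by rw [hVl]; exact ⟨hl, Relation.ReflTransGen.refl⟩
        exact congrFun (hbagree j (Finset.mem_univ j)) ⟨l, hlj⟩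
      · have hcard : (M l).card ≤ 1 := by
          by_contra h
          exact hl (by simpa [JSet] using lt_of_not_ge h)
        exact Finset.card_le_one.1 hcard _ (hAM b hbA l) _ (haM l)
    exact hba ▸ hbA

end DRN
end

section
/- Let f be a network and (I,M') the frozen core of M' ∈ X^□. Let M^0 be the extended forward orbit of M', M^k = F(M^{k−1}) for k ≥ 1, and M the limit of the (eventually constant, decreasing) sequence (M^k). Then for every state x ∈ M^0 there exists a path in S(f) from x to some state in M. -/
/-! Discrete regulatory networks (Siebert), shared definitions. -/

open Finset

namespace DRN

lemma fop_mem {n : ℕ} {p : Fin n → ℕ} (f : NState p → NState p) (K : SymState p)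
    {x : NState p} (hx : memBox x K) (i : Fin n) : f x i ∈ Fop f K i := by
  have hx' : x ∈ Fintype.piFinset K := by
    simpa [Fintype.mem_piFinset, memBox] using hx
  exact Finset.mem_Icc.mpr ⟨Finset.inf_le (f := fun z => f z i) hx', Finset.le_sup (f := fun z => f z i) hx'⟩

lemma fop_mono {n : ℕ} {p : Fin n → ℕ} (f : NState p → NState p) {K K' : SymState p}
    (h : ∀ i, K i ⊆ K' i) (i : Fin n) : Fop f K i ⊆ Fop f K' i := by
  have hpi : Fintype.piFinset K ⊆ Fintype.piFinset K' := by
    intro x hx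
    simp only [Fintype.mem_piFinset] at *
    exact fun j => h j (hx j)
  exact Finset.Icc_subset_Icc (Finset.inf_mono hpi) (Finset.sup_mono hpi)

lemma step_reach {n : ℕ} {p : Fin n → ℕ} (f : NState p → NState p)
    (K : SymState p) (hK : ∀ i, ∃ c d, K i = Finset.Icc c d)
    (hLK : ∀ i, Fop f K i ⊆ K i) :
    ∀ x : NState p, memBox x K →
      ∃ y, memBox y (Fop f K) ∧ Relation.ReflTransGen (AsyncEdge f) x y := by
  classical
  set a : ∀ i, Fin (p i + 1) := fun i => (Fintype.piFinset K).inf (fun z => f z i) with ha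
  set b : ∀ i, Fin (p i + 1) := fun i => (Fintype.piFinset K).sup (fun z => f z i) with hb
  have hLi : ∀ i, Fop f K i = Finset.Icc (a i) (b i) := fun i => rfl
  set μ : NState p → ℕ :=
    fun z => ∑ i, (((a i : ℕ) - (z i : ℕ)) + ((z i : ℕ) - (b i : ℕ))) with hμ
  suffices H : ∀ N (x : NState p), memBox x K → μ x ≤ N →
      ∃ y, memBox y (Fop f K) ∧ Relation.ReflTransGen (AsyncEdge f) x y by
    intro x hx; exact H (μ x) x hx le_rfl
  intro N
  induction N with
  | zero =>
    intro x hx hμx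
    refine ⟨x, fun i => ?_, Relation.ReflTransGen.refl⟩
    have hfx := fop_mem f K hx i
    rw [hLi, Finset.mem_Icc, Fin.le_def, Fin.le_def] at hfx
    have hterm : ((a i : ℕ) - (x i : ℕ)) + ((x i : ℕ) - (b i : ℕ)) = 0 := by
      have : ((a i : ℕ) - (x i : ℕ)) + ((x i : ℕ) - (b i : ℕ)) ≤ μ x :=
        Finset.single_le_sum (f := fun i => ((a i : ℕ) - (x i : ℕ)) + ((x i : ℕ) - (b i : ℕ)))
          (fun _ _ => Nat.zero_le _) (Finset.mem_univ i)
      omega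
    rw [hLi, Finset.mem_Icc, Fin.le_def, Fin.le_def]
    omega
  | succ N ih =>
    intro x hx hμx
    by_cases hxL : memBox x (Fop f K)
    · exact ⟨x, hxL, Relation.ReflTransGen.refl⟩
    obtain ⟨i, hi⟩ := not_forall.mp hxL
    rw [hLi, Finset.mem_Icc, Fin.le_def, Fin.le_def] at hi
    have hfx := fop_mem f K hx i
    rw [hLi, Finset.mem_Icc, Fin.le_def, Fin.le_def] at hfx
    have hab : (a i : ℕ) ≤ (b i : ℕ) := le_trans hfx.1 hfx.2
    have haK : a i ∈ K i := hLK i (by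
      rw [hLi, Finset.mem_Icc]; exact ⟨le_refl _, Fin.le_def.mpr hab⟩)
    have hbK : b i ∈ K i := hLK i (by
      rw [hLi, Finset.mem_Icc]; exact ⟨Fin.le_def.mpr hab, le_refl _⟩)
    obtain ⟨c, d, hcd⟩ := hK i
    rw [hcd, Finset.mem_Icc, Fin.le_def, Fin.le_def] at haK hbK
    have hxK := hx i
    rw [hcd, Finset.mem_Icc, Fin.le_def, Fin.le_def] at hxK
    by_cases hcase : (x i : ℕ) < (a i : ℕ)
    · -- move up
      have hvlt : (x i : ℕ) + 1 < p i + 1 := by have := (a i).isLt; omega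
      set v : Fin (p i + 1) := ⟨(x i : ℕ) + 1, hvlt⟩ with hv
      set x' : NState p := Function.update x i v with hx'def
      have hx'i : x' i = v := Function.update_self i v x
      have hx'j : ∀ j, j ≠ i → x' j = x j := fun j hj => Function.update_of_ne hj v x
      have hlt : x i < f x i := by rw [Fin.lt_def]; omega
      have hedge : AsyncEdge f x x' := by
        refine Or.inr ⟨i, ne_of_gt hlt, hx'j, Or.inl ⟨hlt, ?_⟩⟩
        rw [hx'i]
      have hx'K : memBox x' K := by
        intro j
        by_cases hj : j = i
        · subst hj
          rw [hx'i, hcd, Finset.mem_Icc, Fin.le_def, Fin.le_def]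
          simp only [hv]
          omega
        · rw [hx'j j hj]; exact hx j
      have hμ' : μ x' < μ x := by
        apply Finset.sum_lt_sum
        · intro j _
          by_cases hj : j = i
          · subst hj; rw [hx'i]; simp only [hv]; omega
          · rw [hx'j j hj]
        · exact ⟨i, Finset.mem_univ i, by rw [hx'i]; simp only [hv]; omega⟩
      obtain ⟨y, hy, hpath⟩ := ih x' hx'K (by omega)
      exact ⟨y, hy, Relation.ReflTransGen.head hedge hpath⟩
    · -- move down
      have hbx : (b i : ℕ) < (x i : ℕ) := by omega
      have hvlt : (x i : ℕ) - 1 < p i + 1 := by have := (x i).isLt; omega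
      set v : Fin (p i + 1) := ⟨(x i : ℕ) - 1, hvlt⟩ with hv
      set x' : NState p := Function.update x i v with hx'def
      have hx'i : x' i = v := Function.update_self i v x
      have hx'j : ∀ j, j ≠ i → x' j = x j := fun j hj => Function.update_of_ne hj v x
      have hlt : f x i < x i := by rw [Fin.lt_def]; omega
      have hedge : AsyncEdge f x x' := by
        refine Or.inr ⟨i, ne_of_lt hlt, hx'j, Or.inr ⟨hlt, ?_⟩⟩
        rw [hx'i]; simp only [hv]; omega
      have hx'K : memBox x' K := by
        intro j
        by_cases hj : j = i
        · subst hj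
          rw [hx'i, hcd, Finset.mem_Icc, Fin.le_def, Fin.le_def]
          simp only [hv]
          omega
        · rw [hx'j j hj]; exact hx j
      have hμ' : μ x' < μ x := by
        apply Finset.sum_lt_sum
        · intro j _
          by_cases hj : j = i
          · subst hj; rw [hx'i]; simp only [hv]; omega
          · rw [hx'j j hj]
        · exact ⟨i, Finset.mem_univ i, by rw [hx'i]; simp only [hv]; omega⟩
      obtain ⟨y, hy, hpath⟩ := ih x' hx'K (by omega)
      exact ⟨y, hy, Relation.ReflTransGen.head hedge hpath⟩

/-- with `M⁰` the extended forward orbit of `M'`, `Mᵏ = F(Mᵏ⁻¹)` and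
`M` the limit of this (eventually constant, decreasing) sequence, every state
`x ∈ M⁰` admits a path in `S(f)` to some state in `M`. -/
theorem stmt17 {n : ℕ} {p : Fin n → ℕ} (f : NState p → NState p) (M' : SymState p)
    (hM' : IsBox M') (Mt : SymState p)
    (hMt : ∃ N, ∀ l ≥ N, efoSeq f M' l = Mt)
    (I : Set (Fin n)) (hI : I = {i | (M' i).card = 1 ∧ Mt i = M' i})
    (Mseq : ℕ → SymState p) (hM0 : Mseq 0 = Mt)
    (hMk : ∀ l, Mseq (l + 1) = Fop f (Mseq l))
    (Mlim : SymState p) (hlim : ∃ N, ∀ l ≥ N, Mseq l = Mlim) :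
    ∀ x : NState p, memBox x Mt →
      ∃ y : NState p, memBox y Mlim ∧ Relation.ReflTransGen (AsyncEdge f) x y := by
  obtain ⟨Ne, hNe⟩ := hMt
  have h0 : efoSeq f M' Ne = Mt := hNe Ne le_rfl
  have h1 : efoSeq f M' (Ne + 1) = Mt := hNe _ (by omega)
  have hMtIcc : ∀ i, ∃ c d, Mt i = Finset.Icc c d := by
    intro i
    refine ⟨(efoSeq f M' Ne i ∪ Fop f (efoSeq f M' Ne) i).inf id,
            (efoSeq f M' Ne i ∪ Fop f (efoSeq f M' Ne) i).sup id, ?_⟩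
    rw [← h1]
    simp [efoSeq]
  have hFopMt : ∀ i, Fop f Mt i ⊆ Mt i := by
    intro i y hy
    have h2 : Mt i = Finset.Icc ((efoSeq f M' Ne i ∪ Fop f (efoSeq f M' Ne) i).inf id)
        ((efoSeq f M' Ne i ∪ Fop f (efoSeq f M' Ne) i).sup id) := by
      rw [← h1]
      simp [efoSeq]
    rw [h0] at h2
    rw [h2, Finset.mem_Icc]
    have hmem : y ∈ Mt i ∪ Fop f Mt i := Finset.mem_union_right _ hy
    exact ⟨Finset.inf_le (f := id) hmem, Finset.le_sup (f := id) hmem⟩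
  have hdec : ∀ k, ∀ i, Mseq (k + 1) i ⊆ Mseq k i := by
    intro k
    induction k with
    | zero => intro i; rw [hMk 0, hM0]; exact hFopMt i
    | succ k ih =>
      intro i
      rw [hMk (k + 1)]
      conv_rhs => rw [hMk k]
      exact fop_mono f ih i
  have hIcc : ∀ k, ∀ i, ∃ c d, Mseq k i = Finset.Icc c d := by
    intro k i
    cases k with
    | zero => rw [hM0]; exact hMtIcc i
    | succ k => rw [hMk k]; exact ⟨_, _, rfl⟩
  have hFopSub : ∀ k, ∀ i, Fop f (Mseq k) i ⊆ Mseq k i := by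
    intro k i
    have := hdec k i
    rwa [hMk k] at this
  intro x hx
  obtain ⟨Nl, hNl⟩ := hlim
  have key : ∀ k, ∃ y, memBox y (Mseq k) ∧ Relation.ReflTransGen (AsyncEdge f) x y := by
    intro k
    induction k with
    | zero => exact ⟨x, by rw [hM0]; exact hx, Relation.ReflTransGen.refl⟩
    | succ k ih =>
      obtain ⟨y, hy, hp⟩ := ih
      obtain ⟨z, hz, hp2⟩ := step_reach f (Mseq k) (hIcc k) (hFopSub k) y hy
      refine ⟨z, ?_, hp.trans hp2⟩
      rw [hMk k]
      exact hz
  obtain ⟨y, hy, hp⟩ := key Nl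
  exact ⟨y, by rw [← hNl Nl le_rfl]; exact hy, hp⟩


end DRN
end

section
/- Let f be a network and (I,M') the frozen core of M' ∈ X^□. Let M^0 be the extended forward orbit of M', M^k = F(M^{k−1}) for k ≥ 1, and M the limit of the sequence (M^k). Then there is no trap set of S(f) contained in M^0 \ M; consequently every attractor of S(f) contained in M^0 is contained in M. -/
/-! Discrete regulatory networks (Siebert), shared definitions. -/

open Finset

namespace DRN

section Aux

variable {n : ℕ} {p : Fin n → ℕ}

lemma union_subset_icc {k : ℕ} (s : Finset (Fin (k + 1))) :
    s ⊆ Finset.Icc (s.inf id) (s.sup id) := by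
  intro a ha
  simp only [Finset.mem_Icc]
  exact ⟨Finset.inf_le (f := id) ha, Finset.le_sup (f := id) ha⟩

lemma Fop_mono (f : NState p → NState p) {M N : SymState p}
    (h : ∀ j, M j ⊆ N j) (j : Fin n) : Fop f M j ⊆ Fop f N j := by
  have hpi : Fintype.piFinset M ⊆ Fintype.piFinset N := by
    intro x hx
    rw [Fintype.mem_piFinset] at *
    exact fun i => h i (hx i)
  exact Finset.Icc_subset_Icc (Finset.inf_mono hpi) (Finset.sup_mono hpi)

lemma trap_path (f : NState p → NState p) {D : Set (NState p)}
    (hD : ∀ x ∈ D, ∀ x', AsyncEdge f x x' → x' ∈ D)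
    {x y : NState p} (hx : x ∈ D) (hp : Relation.ReflTransGen (AsyncEdge f) x y) :
    y ∈ D := by
  induction hp with
  | refl => exact hx
  | tail _ e ih => exact hD _ ih _ e

lemma lim_invariant (f : NState p → NState p) (L : SymState p)
    (hbox : ∀ j, ∃ c d : Fin (p j + 1), L j = Finset.Icc c d)
    (hfix : Fop f L = L) {x x' : NState p} (hx : memBox x L)
    (he : AsyncEdge f x x') : memBox x' L := by
  rcases he with ⟨rfl, _⟩ | ⟨i, _, hoth, hmv⟩
  · exact hx
  · intro j
    by_cases hj : j = i
    · subst hj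
      have hxpi : x ∈ Fintype.piFinset L := Fintype.mem_piFinset.2 hx
      have hfj : f x j ∈ L j := by
        rw [← hfix]
        exact Finset.mem_Icc.2 ⟨Finset.inf_le (f := fun z => f z j) hxpi,
          Finset.le_sup (f := fun z => f z j) hxpi⟩
      obtain ⟨c, d, hcd⟩ := hbox j
      rw [hcd] at hfj ⊢
      have hxj := hx j
      rw [hcd] at hxj
      rw [Finset.mem_Icc] at hfj hxj ⊢
      rw [Fin.le_def, Fin.le_def] at hfj hxj ⊢
      rcases hmv with ⟨hlt, hval⟩ | ⟨hlt, hval⟩ <;>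
        rw [Fin.lt_def] at hlt <;> omega
    · rw [hoth j hj]; exact hx j

lemma reach_Fop (f : NState p → NState p) (M : SymState p)
    (hbox : ∀ j, ∃ c d : Fin (p j + 1), M j = Finset.Icc c d)
    (hsub : ∀ j, Fop f M j ⊆ M j)
    (x : NState p) (hx : memBox x M) :
    ∃ y, memBox y (Fop f M) ∧ Relation.ReflTransGen (AsyncEdge f) x y := by
  set a : ∀ i, Fin (p i + 1) := fun i => (Fintype.piFinset M).inf fun z => f z i with ha
  set b : ∀ i, Fin (p i + 1) := fun i => (Fintype.piFinset M).sup fun z => f z i with hb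
  set μ : NState p → ℕ :=
    fun z => ∑ i, (((a i : ℕ) - (z i : ℕ)) + ((z i : ℕ) - (b i : ℕ))) with hμ
  suffices H : ∀ m (z : NState p), μ z = m → memBox z M →
      ∃ y, memBox y (Fop f M) ∧ Relation.ReflTransGen (AsyncEdge f) z y from
    H (μ x) x rfl hx
  intro m
  induction m using Nat.strong_induction_on with
  | _ m ih =>
    intro z hm hz
    have hzpi : z ∈ Fintype.piFinset M := Fintype.mem_piFinset.2 hz
    have hfz : ∀ i, a i ≤ f z i ∧ f z i ≤ b i := fun i =>
      ⟨Finset.inf_le (f := fun w => f w i) hzpi, Finset.le_sup (f := fun w => f w i) hzpi⟩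
    by_cases hall : ∀ i, a i ≤ z i ∧ z i ≤ b i
    · exact ⟨z, fun i => Finset.mem_Icc.2 (hall i), Relation.ReflTransGen.refl⟩
    · push_neg at hall
      obtain ⟨i, hi⟩ := hall
      have habi : a i ≤ b i := le_trans (hfz i).1 (hfz i).2
      have haM : a i ∈ M i := hsub i (Finset.mem_Icc.2 ⟨le_refl _, habi⟩)
      have hbM : b i ∈ M i := hsub i (Finset.mem_Icc.2 ⟨habi, le_refl _⟩)
      obtain ⟨c, d, hcd⟩ := hbox i
      have hzi := hz i
      rw [hcd, Finset.mem_Icc] at hzi haM hbM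
      rcases le_or_gt (a i) (z i) with hcase | hcase
      · -- b i < z i : move down
        have hblt : b i < z i := hi hcase
        have hflt : f z i < z i := lt_of_le_of_lt (hfz i).2 hblt
        have hpos : 0 < (z i : ℕ) := by
          rw [Fin.lt_def] at hflt; omega
        set zi' : Fin (p i + 1) := ⟨(z i : ℕ) - 1, by omega⟩ with hzi'
        set z' := Function.update z i zi' with hz'
        have hz'i : (z' i : ℕ) = (z i : ℕ) - 1 := by
          rw [hz', Function.update_self]
        have hedge : AsyncEdge f z z' := by
          refine Or.inr ⟨i, ne_of_lt hflt, fun j hj => Function.update_of_ne hj _ _, 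
            Or.inr ⟨hflt, by omega⟩⟩
        have hz'M : memBox z' M := by
          intro j
          by_cases hj : j = i
          · subst hj
            rw [hcd, Finset.mem_Icc]
            obtain ⟨hb1, hb2⟩ := hbM
            obtain ⟨hc1, hc2⟩ := hzi
            rw [Fin.le_def] at hb1 hb2 hc1 hc2
            rw [Fin.lt_def] at hblt
            constructor <;> rw [Fin.le_def] <;> omega
          · rw [hz', Function.update_of_ne hj]; exact hz j
        have hmeas : μ z' < m := by
          rw [← hm, hμ]
          apply Finset.sum_lt_sum
          · intro j _
            by_cases hj : j = i
            · subst hj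
              rw [hz'i]
              rw [Fin.lt_def] at hblt
              rw [Fin.le_def] at hcase habi
              omega
            · rw [hz', Function.update_of_ne hj]
          · refine ⟨i, Finset.mem_univ i, ?_⟩
            rw [hz'i]
            rw [Fin.lt_def] at hblt
            rw [Fin.le_def] at hcase habi
            omega
        obtain ⟨y, hy, hpath⟩ := ih (μ z') hmeas z' rfl hz'M
        exact ⟨y, hy, Relation.ReflTransGen.head hedge hpath⟩
      · -- z i < a i : move up
        have hflt : z i < f z i := lt_of_lt_of_le hcase (hfz i).1
        have hlt' : (z i : ℕ) + 1 < p i + 1 := by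
          rw [Fin.lt_def] at hcase
          have := (a i).isLt
          omega
        set zi' : Fin (p i + 1) := ⟨(z i : ℕ) + 1, hlt'⟩ with hzi'
        set z' := Function.update z i zi' with hz'
        have hz'i : (z' i : ℕ) = (z i : ℕ) + 1 := by
          rw [hz', Function.update_self]
        have hedge : AsyncEdge f z z' := by
          refine Or.inr ⟨i, ne_of_gt hflt, fun j hj => Function.update_of_ne hj _ _,
            Or.inl ⟨hflt, hz'i⟩⟩
        have hz'M : memBox z' M := by
          intro j
          by_cases hj : j = i
          · subst hj
            rw [hcd, Finset.mem_Icc]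
            obtain ⟨ha1, ha2⟩ := haM
            obtain ⟨hc1, hc2⟩ := hzi
            rw [Fin.le_def] at ha1 ha2 hc1 hc2
            rw [Fin.lt_def] at hcase
            constructor <;> rw [Fin.le_def] <;> omega
          · rw [hz', Function.update_of_ne hj]; exact hz j
        have hmeas : μ z' < m := by
          rw [← hm, hμ]
          apply Finset.sum_lt_sum
          · intro j _
            by_cases hj : j = i
            · subst hj
              rw [hz'i]
              rw [Fin.lt_def] at hcase
              rw [Fin.le_def] at habi
              omega
            · rw [hz', Function.update_of_ne hj]
          · refine ⟨i, Finset.mem_univ i, ?_⟩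
            rw [hz'i]
            rw [Fin.lt_def] at hcase
            rw [Fin.le_def] at habi
            omega
        obtain ⟨y, hy, hpath⟩ := ih (μ z') hmeas z' rfl hz'M
        exact ⟨y, hy, Relation.ReflTransGen.head hedge hpath⟩

end Aux

/-- with `M⁰` the extended forward orbit of `M'`, `Mᵏ = F(Mᵏ⁻¹)` and
`M` the limit of this sequence, there is no trap set of `S(f)` contained in
`M⁰ \ M`; consequently every attractor of `S(f)` contained in `M⁰` is contained
in `M`. -/
theorem stmt18 {n : ℕ} {p : Fin n → ℕ} (f : NState p → NState p) (M' : SymState p)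
    (hM' : IsBox M') (Mt : SymState p)
    (hMt : ∃ N, ∀ l ≥ N, efoSeq f M' l = Mt)
    (I : Set (Fin n)) (hI : I = {i | (M' i).card = 1 ∧ Mt i = M' i})
    (Mseq : ℕ → SymState p) (hM0 : Mseq 0 = Mt)
    (hMk : ∀ l, Mseq (l + 1) = Fop f (Mseq l))
    (Mlim : SymState p) (hlim : ∃ N, ∀ l ≥ N, Mseq l = Mlim) :
    (∀ D : Set (NState p), (∀ x ∈ D, memBox x Mt ∧ ¬ memBox x Mlim) →
      ¬ IsTrapSet f D) ∧
    (∀ A : Set (NState p), IsAttractor f A → (∀ a ∈ A, memBox a Mt) →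
      ∀ a ∈ A, memBox a Mlim) := by
  classical
  obtain ⟨N', hN'⟩ := hMt
  have h0 : efoSeq f M' N' = Mt := hN' _ le_rfl
  have h1 : efoSeq f M' (N' + 1) = Mt := hN' _ (Nat.le_succ N')
  have key : ∀ j, Mt j =
      Finset.Icc ((Mt j ∪ Fop f Mt j).inf id) ((Mt j ∪ Fop f Mt j).sup id) := by
    intro j
    conv_lhs => rw [← h1]
    simp only [efoSeq, h0]
  have hMtbox : ∀ j, ∃ c d : Fin (p j + 1), Mt j = Finset.Icc c d :=
    fun j => ⟨_, _, key j⟩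
  have hMtF : ∀ j, Fop f Mt j ⊆ Mt j := by
    intro j a haa
    rw [key j]
    exact union_subset_icc _ (Finset.mem_union_right _ haa)
  have hdec : ∀ k j, Mseq (k + 1) j ⊆ Mseq k j := by
    intro k
    induction k with
    | zero => intro j; rw [hMk 0, hM0]; exact hMtF j
    | succ k ihk =>
        intro j
        calc Mseq (k + 2) j = Fop f (Mseq (k + 1)) j := by rw [hMk]
          _ ⊆ Fop f (Mseq k) j := Fop_mono f ihk j
          _ = Mseq (k + 1) j := (congrFun (hMk k) j).symm
  have hboxseq : ∀ k j, ∃ c d : Fin (p j + 1), Mseq k j = Finset.Icc c d := by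
    intro k j
    cases k with
    | zero => rw [hM0]; exact hMtbox j
    | succ k => rw [hMk k]; exact ⟨_, _, rfl⟩
  have hFsub : ∀ k j, Fop f (Mseq k) j ⊆ Mseq k j := by
    intro k j
    rw [← hMk k]
    exact hdec k j
  have claim : ∀ D : Set (NState p), D.Nonempty →
      (∀ x ∈ D, ∀ x', AsyncEdge f x x' → x' ∈ D) →
      (∀ x ∈ D, memBox x Mt) → ∀ k, ∃ x ∈ D, memBox x (Mseq k) := by
    intro D hne htrap hmt k
    induction k with
    | zero =>
        obtain ⟨x, hx⟩ := hne
        exact ⟨x, hx, by rw [hM0]; exact hmt x hx⟩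
    | succ k ihk =>
        obtain ⟨x, hxD, hxM⟩ := ihk
        obtain ⟨y, hyF, hpath⟩ := reach_Fop f (Mseq k) (hboxseq k) (hFsub k) x hxM
        refine ⟨y, trap_path f htrap hxD hpath, ?_⟩
        rw [hMk k]
        exact hyF
  obtain ⟨N, hN⟩ := hlim
  have hNlim : Mseq N = Mlim := hN N le_rfl
  have hlimfix : Fop f Mlim = Mlim := by
    rw [← hNlim, ← hMk N]
    rw [hNlim]
    exact hN (N + 1) (Nat.le_succ N)
  have hlimbox : ∀ j, ∃ c d : Fin (p j + 1), Mlim j = Finset.Icc c d := by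
    intro j
    rw [← hlimfix]
    exact ⟨_, _, rfl⟩
  constructor
  · intro D hD hTrap
    obtain ⟨x, hxD, hxM⟩ := claim D hTrap.1 hTrap.2 (fun x hx => (hD x hx).1) N
    rw [hNlim] at hxM
    exact (hD x hxD).2 hxM
  · intro A hA hAMt a ha
    obtain ⟨y, hyA, hyM⟩ := claim A hA.1.1 hA.1.2 hAMt N
    rw [hNlim] at hyM
    have hpath := hA.2 y hyA a ha
    clear hyA ha
    induction hpath with
    | refl => exact hyM
    | tail _ e ih => exact lim_invariant f Mlim hlimbox hlimfix ih e

end DRN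
end
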